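/- Every basis vector e_Θ is an eigenvector of the dimensionless Hamiltonian ĥ: ĥ e_Θ = (3p − 2q(Θ)) e_Θ. Hence ĥ has exactly the four eigenvalues 3p, 3p−2, 3p−4, 3p−6, each energy level being equally spaced. -/

import Mathlib

open scoped BigOperators
open Finset

/-- Index set: triples Θ = (θ₁,θ₂,θ₃) with θᵢ ∈ {0,1}. -/
abbrev WIdx := Fin 3 → Fin 2

/-- The 8-dimensional state space V = EuclideanSpace ℂ ({0,1}³). -/
abbrev WV := EuclideanSpace ℂ WIdx

/-- Orthonormal basis vector e_Θ. -/
noncomputable def eV (Θ : WIdx) : WV := EuclideanSpace.single Θ 1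

/-- The basis (e_Θ)_Θ of V, as a `Basis`. -/
noncomputable def bV : Module.Basis WIdx ℂ WV := (EuclideanSpace.basisFun WIdx ℂ).toBasis

/-- q(Θ) = θ₁ + θ₂ + θ₃. -/
def qv (Θ : WIdx) : ℕ := ∑ j, (Θ j : ℕ)

/-- Sign factor (−1)^(θ₁ + ⋯ + θ_{i−1}). -/
def sgnBelow (i : Fin 3) (Θ : WIdx) : ℂ :=
  (-1 : ℂ) ^ (∑ j : Fin 3, if (j : ℕ) < (i : ℕ) then (Θ j : ℕ) else 0)

/-- Sign factor (−1)^(θ₁ + ⋯ + θ_i). -/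
def sgnUpTo (i : Fin 3) (Θ : WIdx) : ℂ :=
  (-1 : ℂ) ^ (∑ j : Fin 3, if (j : ℕ) ≤ (i : ℕ) then (Θ j : ℕ) else 0)

/-- A_i⁻ e_Θ = θ_i (−1)^(θ₁+⋯+θ_{i−1}) √(p−q(Θ)+1) e_{Θ[θ_i↦0]}. -/
noncomputable def Aminus (p : ℕ) (i : Fin 3) : WV →ₗ[ℂ] WV :=
  bV.constr ℂ fun Θ =>
    (((Θ i : ℕ) : ℂ) * sgnBelow i Θ *
      ((Real.sqrt ((p : ℝ) - (qv Θ : ℝ) + 1) : ℝ) : ℂ)) • eV (Function.update Θ i 0)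

/-- A_i⁺ e_Θ = (1−θ_i) (−1)^(θ₁+⋯+θ_{i−1}) √(p−q(Θ)) e_{Θ[θ_i↦1]}. -/
noncomputable def Aplus (p : ℕ) (i : Fin 3) : WV →ₗ[ℂ] WV :=
  bV.constr ℂ fun Θ =>
    (((1 : ℂ) - ((Θ i : ℕ) : ℂ)) * sgnBelow i Θ *
      ((Real.sqrt ((p : ℝ) - (qv Θ : ℝ)) : ℝ) : ℂ)) • eV (Function.update Θ i 1)

/-- Anticommutator {X,Y} = XY + YX. -/
noncomputable def acommOp (X Y : WV →ₗ[ℂ] WV) : WV →ₗ[ℂ] WV := X ∘ₗ Y + Y ∘ₗ X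

/-- Commutator [X,Y] = XY − YX. -/
noncomputable def commOp (X Y : WV →ₗ[ℂ] WV) : WV →ₗ[ℂ] WV := X ∘ₗ Y - Y ∘ₗ X

/-- Dimensionless Hamiltonian ĥ = Σᵢ {A_i⁺, A_i⁻}. -/
noncomputable def hOp (p : ℕ) : WV →ₗ[ℂ] WV := ∑ i, acommOp (Aplus p i) (Aminus p i)

/-- Position operator r̂_k(t) = e^{−it} A_k⁺ + e^{it} A_k⁻. -/
noncomputable def rOp (p : ℕ) (k : Fin 3) (t : ℝ) : WV →ₗ[ℂ] WV :=
  Complex.exp (-(t : ℂ) * Complex.I) • Aplus p k +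
    Complex.exp ((t : ℂ) * Complex.I) • Aminus p k

/-- Momentum operator p̂_k(t) = −i (e^{−it} A_k⁺ − e^{it} A_k⁻). -/
noncomputable def pOp (p : ℕ) (k : Fin 3) (t : ℝ) : WV →ₗ[ℂ] WV :=
  (-Complex.I) • (Complex.exp (-(t : ℂ) * Complex.I) • Aplus p k -
    Complex.exp ((t : ℂ) * Complex.I) • Aminus p k)

/-- Levi-Civita symbol ε_{jkl} with ε_{123} = 1 (indices 0,1,2 here). -/
def eps (j k l : Fin 3) : ℂ :=
  if (j, k, l) = (0, 1, 2) ∨ (j, k, l) = (1, 2, 0) ∨ (j, k, l) = (2, 0, 1) then 1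
  else if (j, k, l) = (2, 1, 0) ∨ (j, k, l) = (1, 0, 2) ∨ (j, k, l) = (0, 2, 1) then -1
  else 0

/-- Angular momentum M_j = −i Σ_{k,l} ε_{jkl} {A_k⁺, A_l⁻}. -/
noncomputable def Mop (p : ℕ) (j : Fin 3) : WV →ₗ[ℂ] WV :=
  (-Complex.I) • ∑ k, ∑ l, eps j k l • acommOp (Aplus p k) (Aminus p l)

/-- Eigenvectors v_k(Θ,t) of the position operator r̂_k(t). -/
noncomputable def vVec (k : Fin 3) (t : ℝ) (Θ : WIdx) : WV :=
  (((Real.sqrt 2)⁻¹ : ℝ) : ℂ) •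
    (eV (Function.update Θ k 0) +
      (sgnUpTo k Θ * Complex.exp (-(t : ℂ) * Complex.I)) • eV (Function.update Θ k 1))

/-- Eigenvectors ṽ_k(Θ,t) of the momentum operator p̂_k(t). -/
noncomputable def vTilde (k : Fin 3) (t : ℝ) (Θ : WIdx) : WV :=
  (((Real.sqrt 2)⁻¹ : ℝ) : ℂ) •
    (eV (Function.update Θ k 0) -
      (Complex.I * sgnUpTo k Θ * Complex.exp (-(t : ℂ) * Complex.I)) • eV (Function.update Θ k 1))

/-- The non-stationary state z = (1/√2)(e_{(0,0,0)} + e_{(0,0,1)}). -/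
noncomputable def zState : WV :=
  (((Real.sqrt 2)⁻¹ : ℝ) : ℂ) • (eV ![0, 0, 0] + eV ![0, 0, 1])

/-- The state x₁ = (1/√2)(e_{(0,1,0)} + e_{(1,1,0)}). -/
noncomputable def x1State : WV :=
  (((Real.sqrt 2)⁻¹ : ℝ) : ℂ) • (eV ![0, 1, 0] + eV ![1, 1, 0])

local notation "⟪" x ", " y "⟫" => @inner ℂ _ _ x y

/-! Each anticommutator {A_i⁺, A_i⁻} is diagonal in the basis e_Θ: on e_Θ only one of its two
products is nonzero, and it hops to e_{Θ[θ_i ↦ 1 - θ_i]} and back with the same sign and the same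
square root both ways, so it returns e_Θ scaled by p − q(Θ) + θ_i. Summing over i gives
3p − 2q(Θ), and the eigenvalues of an operator that is diagonal in a basis are its diagonal
entries; here q(Θ) takes the values 0, 1, 2, 3. -/

open Module.End

theorem Module.Basis.exists_ne_zero_apply_eq_smul_iff {ι K M : Type*} [Fintype ι] [DecidableEq ι]
    [Field K] [AddCommGroup M] [Module K M] (b : Module.Basis ι K M) (d : ι → K)
    {f : Module.End K M} (hf : ∀ i, f (b i) = d i • b i) (μ : K) :
    (∃ x, x ≠ 0 ∧ f x = μ • x) ↔ μ ∈ Set.range d := by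
  have hdiag : f = Matrix.toLin b b (Matrix.diagonal d) :=
    b.ext fun i => by simp [hf, Matrix.toLin_self, Matrix.diagonal_apply]
  rw [Set.mem_range, ← hasEigenvalue_toLin_diagonal_iff d b, ← hdiag]
  constructor
  · rintro ⟨x, hx0, hx⟩
    exact hasEigenvalue_of_hasEigenvector ⟨mem_eigenspace_iff.mpr hx, hx0⟩
  · intro h
    obtain ⟨x, hx⟩ := h.exists_hasEigenvector
    exact ⟨x, hx.2, mem_eigenspace_iff.mp hx.1⟩

lemma bV_apply (Θ : WIdx) : bV Θ = eV Θ := by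
  simp [bV, eV, EuclideanSpace.basisFun_apply]

lemma qv_le_three (Θ : WIdx) : qv Θ ≤ 3 :=
  (Finset.sum_le_sum fun j _ => Nat.lt_succ_iff.mp (Θ j).is_lt).trans_eq (by simp)

lemma qv_update_add (Θ : WIdx) (i : Fin 3) (c : Fin 2) :
    qv (Function.update Θ i c) + Θ i = qv Θ + c := by
  unfold qv
  rw [← Finset.add_sum_erase _ _ (Finset.mem_univ i),
    ← Finset.add_sum_erase _ _ (Finset.mem_univ i),
    Finset.sum_congr rfl fun j hj => by rw [Function.update_of_ne (Finset.ne_of_mem_erase hj)]]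
  simp only [Function.update_self]
  ring

lemma sgnBelow_update_self (i : Fin 3) (Θ : WIdx) (c : Fin 2) :
    sgnBelow i (Function.update Θ i c) = sgnBelow i Θ := by
  unfold sgnBelow
  congr 1
  refine Finset.sum_congr rfl fun j _ => ?_
  split_ifs with h
  · rw [Function.update_of_ne (Fin.ne_of_lt h)]
  · rfl

lemma sgnBelow_mul_sqrt_mul_self (i : Fin 3) (Θ : WIdx) {a : ℝ} (ha : 0 ≤ a) :
    (sgnBelow i Θ * (√a : ℂ)) * (sgnBelow i Θ * (√a : ℂ)) = a := by
  have hsgn : sgnBelow i Θ * sgnBelow i Θ = 1 := by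
    rw [sgnBelow, ← pow_add]
    exact Even.neg_one_pow ⟨_, rfl⟩
  rw [mul_mul_mul_comm, hsgn, one_mul, ← Complex.ofReal_mul, Real.mul_self_sqrt ha]

section

variable (p : ℕ) (i : Fin 3)

lemma Aminus_eV (Θ : WIdx) :
    Aminus p i (eV Θ) = (((Θ i : ℕ) : ℂ) * sgnBelow i Θ *
      ((√((p : ℝ) - qv Θ + 1) : ℝ) : ℂ)) • eV (Function.update Θ i 0) := by
  rw [← bV_apply, Aminus, Module.Basis.constr_basis]

lemma Aplus_eV (Θ : WIdx) :
    Aplus p i (eV Θ) = ((1 - ((Θ i : ℕ) : ℂ)) * sgnBelow i Θ *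
      ((√((p : ℝ) - qv Θ) : ℝ) : ℂ)) • eV (Function.update Θ i 1) := by
  rw [← bV_apply, Aplus, Module.Basis.constr_basis]

lemma Aminus_eV_of_eq_zero {Θ : WIdx} (hΘ : Θ i = 0) : Aminus p i (eV Θ) = 0 := by
  simp [Aminus_eV, hΘ]

lemma Aplus_eV_of_eq_one {Θ : WIdx} (hΘ : Θ i = 1) : Aplus p i (eV Θ) = 0 := by
  simp [Aplus_eV, hΘ]

lemma Aminus_Aplus_eV_of_eq_zero {Θ : WIdx} (hΘ : Θ i = 0) (hq : qv Θ ≤ p) :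
    Aminus p i (Aplus p i (eV Θ)) = ((p : ℂ) - qv Θ) • eV Θ := by
  have hqv : qv (Function.update Θ i 1) = qv Θ + 1 := by
    simpa [hΘ] using qv_update_add Θ i 1
  have hamp := sgnBelow_mul_sqrt_mul_self i Θ
    (sub_nonneg.mpr (Nat.cast_le.mpr hq : (qv Θ : ℝ) ≤ p))
  rw [Aplus_eV, map_smul, Aminus_eV, smul_smul, Function.update_idem, ← hΘ,
    Function.update_eq_self, sgnBelow_update_self, hqv, hΘ, Function.update_self]
  push_cast [Fin.val_zero, Fin.val_one] at hamp ⊢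
  rw [show (p : ℝ) - (qv Θ + 1) + 1 = p - qv Θ by ring]
  congr 1
  linear_combination hamp

lemma Aplus_Aminus_eV_of_eq_one {Θ : WIdx} (hΘ : Θ i = 1) (hq : qv Θ ≤ p + 1) :
    Aplus p i (Aminus p i (eV Θ)) = ((p : ℂ) - qv Θ + 1) • eV Θ := by
  have hqv : (qv (Function.update Θ i 0) : ℝ) = qv Θ - 1 := by
    rw [eq_sub_iff_add_eq]
    exact_mod_cast by simpa [hΘ] using qv_update_add Θ i 0
  have hamp := sgnBelow_mul_sqrt_mul_self i Θ
    (by have : (qv Θ : ℝ) ≤ p + 1 := by exact_mod_cast hq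
        linarith : (0 : ℝ) ≤ p - qv Θ + 1)
  rw [Aminus_eV, map_smul, Aplus_eV, smul_smul, Function.update_idem, ← hΘ,
    Function.update_eq_self, sgnBelow_update_self, hqv, hΘ, Function.update_self]
  push_cast [Fin.val_zero, Fin.val_one] at hamp ⊢
  rw [show (p : ℝ) - (qv Θ - 1) = p - qv Θ + 1 by ring]
  congr 1
  linear_combination hamp

lemma acommOp_Aplus_Aminus_eV {Θ : WIdx} (hq : qv Θ ≤ p) :
    acommOp (Aplus p i) (Aminus p i) (eV Θ) = ((p : ℂ) - qv Θ + (Θ i : ℕ)) • eV Θ := by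
  rw [acommOp, LinearMap.add_apply, LinearMap.comp_apply, LinearMap.comp_apply]
  obtain hΘ | hΘ : Θ i = 0 ∨ Θ i = 1 := by omega
  · rw [Aminus_eV_of_eq_zero p i hΘ, map_zero, zero_add,
      Aminus_Aplus_eV_of_eq_zero p i hΘ hq, hΘ, Fin.val_zero, Nat.cast_zero, add_zero]
  · rw [Aplus_eV_of_eq_one p i hΘ, map_zero, add_zero,
      Aplus_Aminus_eV_of_eq_one p i hΘ (hq.trans p.le_succ), hΘ, Fin.val_one, Nat.cast_one]

end

lemma hOp_eV (p : ℕ) {Θ : WIdx} (hq : qv Θ ≤ p) :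
    hOp p (eV Θ) = (3 * (p : ℂ) - 2 * qv Θ) • eV Θ := by
  rw [hOp, LinearMap.sum_apply, Finset.sum_congr rfl fun i _ => acommOp_Aplus_Aminus_eV p i hq,
    ← Finset.sum_smul, Finset.sum_add_distrib, ← Nat.cast_sum, ← qv]
  simp only [Finset.sum_const, Finset.card_univ, Fintype.card_fin, nsmul_eq_mul]
  congr 1
  push_cast
  ring

lemma range_qv : Set.range qv = {0, 1, 2, 3} := by
  ext n
  simp only [Set.mem_range, Set.mem_insert_iff, Set.mem_singleton_iff]
  constructor
  · rintro ⟨Θ, rfl⟩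
    have := qv_le_three Θ
    omega
  · rintro (rfl | rfl | rfl | rfl)
    exacts [⟨![0, 0, 0], rfl⟩, ⟨![1, 0, 0], rfl⟩, ⟨![1, 1, 0], rfl⟩, ⟨![1, 1, 1], rfl⟩]

/-- ĥ e_Θ = (3p − 2q(Θ)) e_Θ, and ĥ has exactly the four eigenvalues
3p, 3p−2, 3p−4, 3p−6. -/
theorem stmt4 (p : ℕ) (hp : 3 ≤ p) :
    (∀ Θ : WIdx, hOp p (eV Θ) = (3 * (p : ℂ) - 2 * (qv Θ : ℂ)) • eV Θ) ∧
    (∀ μ : ℂ, (∃ x : WV, x ≠ 0 ∧ hOp p x = μ • x) ↔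
      μ ∈ ({3 * (p : ℂ), 3 * (p : ℂ) - 2, 3 * (p : ℂ) - 4, 3 * (p : ℂ) - 6} : Set ℂ)) := by
  have hdiag (Θ : WIdx) := hOp_eV p ((qv_le_three Θ).trans hp)
  refine ⟨hdiag, fun μ => ?_⟩
  rw [bV.exists_ne_zero_apply_eq_smul_iff _ (fun Θ => by rw [bV_apply]; exact hdiag Θ),
    show (fun Θ => 3 * (p : ℂ) - 2 * qv Θ) = (fun n : ℕ => 3 * (p : ℂ) - 2 * n) ∘ qv from rfl,
    Set.range_comp, range_qv]
  norm_num [Set.image_insert_eq]
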